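/- arXiv:1705.00466 — 6 statements merged into one kernel-verified Lean document; each statement's English description precedes it below -/
import Mathlib

section
/- Let X be a topological space and A a point-separating subalgebra of continuous real-valued functions on X, closed under composition with smooth functions (or at least containing inverses of nowhere-vanishing elements), and suppose A contains a proper function f : X → ℝ. Then every ℝ-algebra character χ : A → ℝ is evaluation at some point of X. -/
/-!
If `χ` were not an evaluation, every point `x` would carry some `g ∈ A` with `g x ≠ χ g`, so
`(g - χ g)²` is a nonnegative element of `ker χ` that is positive near `x`. The level set
`f⁻¹(χ f)` of the proper function `f` is compact, so finitely many of these squares, together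
with `(f - χ f)²`, add up to an element of `ker χ` without zeros. It would be invertible in `A`,
which is absurd since `χ` sends it to `0`.
-/

theorem IsCompact.exists_finset_sum_pos {X ι : Type*} [TopologicalSpace X] {K : Set X}
    (hK : IsCompact K) (p : ι → C(X, ℝ)) (hp : ∀ i y, 0 ≤ p i y)
    (hcover : ∀ y ∈ K, ∃ i, 0 < p i y) :
    ∃ t : Finset ι, ∀ y ∈ K, 0 < ∑ i ∈ t, p i y := by
  obtain ⟨t, ht⟩ := hK.elim_finite_subcover (fun i ↦ {y | 0 < p i y})
    (fun i ↦ isOpen_lt continuous_const (p i).continuous)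
    (fun y hy ↦ Set.mem_iUnion.2 (hcover y hy))
  refine ⟨t, fun y hy ↦ ?_⟩
  obtain ⟨i, hi, hiy⟩ := Set.mem_iUnion₂.1 (ht hy)
  exact Finset.sum_pos' (fun j _ ↦ hp j y) ⟨i, hi, hiy⟩

section Character

variable {X : Type*} [TopologicalSpace X] {A : Subalgebra ℝ C(X, ℝ)} (χ : A →ₐ[ℝ] ℝ)

noncomputable def sqDeviation (g : A) : A := (g - algebraMap ℝ A (χ g)) ^ 2

@[simp]
theorem map_sqDeviation (g : A) : χ (sqDeviation χ g) = 0 := by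
  simp [sqDeviation]

@[simp]
theorem sqDeviation_apply (g : A) (y : X) :
    (sqDeviation χ g : C(X, ℝ)) y = ((g : C(X, ℝ)) y - χ g) ^ 2 := by
  simp [sqDeviation]

theorem sqDeviation_nonneg (g : A) (y : X) : 0 ≤ (sqDeviation χ g : C(X, ℝ)) y := by
  rw [sqDeviation_apply]
  positivity

theorem sqDeviation_pos {g : A} {y : X} (hy : (g : C(X, ℝ)) y ≠ χ g) :
    0 < (sqDeviation χ g : C(X, ℝ)) y := by
  rw [sqDeviation_apply]
  exact sq_pos_of_ne_zero (sub_ne_zero.2 hy)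

theorem exists_apply_eq_zero_of_map_eq_zero
    (hinv : ∀ g ∈ A, (∀ x : X, g x ≠ 0) → ∃ h ∈ A, g * h = 1)
    {G : A} (hG : χ G = 0) : ∃ x, (G : C(X, ℝ)) x = 0 := by
  by_contra! hzero
  obtain ⟨h, hhA, hGh⟩ := hinv G G.2 hzero
  have hunit : χ G * χ ⟨h, hhA⟩ = 1 := by
    rw [← map_mul, show G * ⟨h, hhA⟩ = 1 from Subtype.ext hGh, map_one]
  simp [hG] at hunit

end Character

theorem character_is_evaluation_general
    {X : Type*} [TopologicalSpace X] (A : Subalgebra ℝ C(X, ℝ))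
    (hinv : ∀ g ∈ A, (∀ x : X, g x ≠ 0) → ∃ h ∈ A, g * h = 1)
    (hproper : ∃ f ∈ A, ∀ K : Set ℝ, IsCompact K → IsCompact (⇑f ⁻¹' K))
    (χ : A →ₐ[ℝ] ℝ) : ∃ x : X, ∀ g : A, χ g = (g : C(X, ℝ)) x := by
  obtain ⟨f, hfA, hf⟩ := hproper
  by_contra! hnot
  choose g hg using hnot
  obtain ⟨t, ht⟩ := (hf {χ ⟨f, hfA⟩} isCompact_singleton).exists_finset_sum_pos
    (fun x ↦ (sqDeviation χ (g x) : C(X, ℝ))) (fun x ↦ sqDeviation_nonneg χ (g x))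
    (fun x _ ↦ ⟨x, sqDeviation_pos χ (hg x).symm⟩)
  let G : A := sqDeviation χ ⟨f, hfA⟩ + ∑ x ∈ t, sqDeviation χ (g x)
  obtain ⟨y, hy⟩ := exists_apply_eq_zero_of_map_eq_zero χ hinv (G := G) (by simp [G])
  simp only [G, Subalgebra.coe_add, AddSubmonoidClass.coe_finsetSum, ContinuousMap.add_apply,
    ContinuousMap.coe_sum, Finset.sum_apply] at hy
  have hsum_nonneg : 0 ≤ ∑ x ∈ t, (sqDeviation χ (g x) : C(X, ℝ)) y :=
    Finset.sum_nonneg fun x _ ↦ sqDeviation_nonneg χ (g x) y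
  have hfy : f y = χ ⟨f, hfA⟩ := by
    have hsq : (f y - χ ⟨f, hfA⟩) ^ 2 = 0 := by
      linarith [sqDeviation_apply χ ⟨f, hfA⟩ y, sqDeviation_nonneg χ ⟨f, hfA⟩ y]
    exact sub_eq_zero.1 (pow_eq_zero_iff two_ne_zero |>.1 hsq)
  linarith [ht y hfy, sqDeviation_nonneg χ ⟨f, hfA⟩ y]

/-- Let `X` be Hausdorff and `A` a point-separating subalgebra of `C(X, ℝ)` in which
every nowhere-vanishing element is invertible and which contains a proper function.
Then every ℝ-algebra character of `A` is evaluation at a point of `X`. -/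
theorem character_is_evaluation
    {X : Type*} [TopologicalSpace X] [T2Space X] (A : Subalgebra ℝ C(X, ℝ))
    (hsep : ∀ x y : X, x ≠ y → ∃ f ∈ A, f x ≠ f y)
    (hinv : ∀ g ∈ A, (∀ x : X, g x ≠ 0) → ∃ h ∈ A, g * h = 1)
    (hproper : ∃ f ∈ A, ∀ K : Set ℝ, IsCompact K → IsCompact (⇑f ⁻¹' K))
    (χ : A →ₐ[ℝ] ℝ) : ∃ x : X, ∀ g : A, χ g = (g : C(X, ℝ)) x :=
  character_is_evaluation_general A hinv hproper χ
end

section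
/- Let X be a Hausdorff space and A ⊆ C(X, ℝ) a normal algebra of continuous functions: for any disjoint closed sets C, D ⊆ X there is f ∈ A with 0 ≤ f ≤ 1, f = 0 on C and f = 1 on D. Assume the topology on X is generated by the sets f⁻¹(V) for f ∈ A and V ⊆ ℝ open. Then the evaluation map X → Spec_r A with the Gelfand topology is a closed map onto its image; equivalently, for every closed Y ⊆ X, Y = {x ∈ X | f(x) = 0 for all f ∈ A vanishing on Y}. -/
/-- Let `X` be Hausdorff and `A ⊆ C(X, ℝ)` a normal algebra of continuous functions,
generating the topology of `X`. Then every closed subset `Y ⊆ X` is the common zero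
set of the functions of `A` vanishing on `Y` (equivalently, the evaluation map to
the real spectrum with the Gelfand topology is closed onto its image). -/
theorem closed_eq_zero_set_of_normal_algebra
    {X : Type*} [tX : TopologicalSpace X] [T2Space X] (A : Subalgebra ℝ C(X, ℝ))
    (hnormal : ∀ C D : Set X, IsClosed C → IsClosed D → Disjoint C D →
      ∃ f ∈ A, (∀ x, f x ∈ Set.Icc (0 : ℝ) 1) ∧ (∀ x ∈ C, f x = 0) ∧ ∀ x ∈ D, f x = 1)
    (hgen : tX = TopologicalSpace.generateFrom
      {U : Set X | ∃ f ∈ A, ∃ V : Set ℝ, IsOpen V ∧ U = ⇑f ⁻¹' V})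
    (Y : Set X) (hY : IsClosed Y) :
    Y = {x : X | ∀ f ∈ A, (∀ y ∈ Y, f y = 0) → f x = 0} := by
  ext x
  simp only [Set.mem_setOf_eq]
  constructor
  · intro hx f _ hf
    exact hf x hx
  · intro hx
    by_contra hxY
    obtain ⟨f, hfA, -, hfY, hfx⟩ := hnormal Y {x} hY isClosed_singleton
      (Set.disjoint_singleton_right.mpr hxY)
    have h0 : f x = 0 := hx f hfA hfY
    have h1 : f x = 1 := hfx x rfl
    exact one_ne_zero (h1 ▸ h0)
end

section
/- Let 𝒮 be a locally finite partition of a topological space M into locally closed connected subsets satisfying the frontier condition (each stratum in the closure of another stratum is contained in it and distinct strata in a closure relation have strictly lower dimension). Then a stratum S ∈ 𝒮 is maximal for the order S ≤ T ⟺ S ⊆ cl(T) if and only if S is open in M. -/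
/-- For a stratification (a locally finite partition into locally closed connected
pieces satisfying the frontier condition with strictly decreasing dimension), a
stratum is maximal with respect to the order `S ≤ T ↔ S ⊆ closure T` if and only if
it is open. -/
theorem stratum_maximal_iff_isOpen
    {M : Type*} [TopologicalSpace M] [T2Space M]
    (𝒮 : Set (Set M)) (d : Set M → ℕ)
    (hne : ∀ S ∈ 𝒮, S.Nonempty)
    (hdisj : ∀ S ∈ 𝒮, ∀ T ∈ 𝒮, S ≠ T → Disjoint S T)
    (hcover : ⋃₀ 𝒮 = Set.univ)
    (hlc : ∀ S ∈ 𝒮, IsLocallyClosed S)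
    (hconn : ∀ S ∈ 𝒮, IsConnected S)
    (hlf : ∀ x : M, ∃ U ∈ nhds x, {S ∈ 𝒮 | (S ∩ U).Nonempty}.Finite)
    (hfrontier : ∀ S ∈ 𝒮, ∀ T ∈ 𝒮, S ≠ T → (S ∩ closure T).Nonempty →
      S ⊆ closure T ∧ d S < d T)
    (S : Set M) (hS : S ∈ 𝒮) :
    (∀ T ∈ 𝒮, S ⊆ closure T → S = T) ↔ IsOpen S := by
  constructor
  · -- maximal → open
    intro hmax
    rw [isOpen_iff_mem_nhds]
    intro x hx
    obtain ⟨U, hU, hfin⟩ := hlf x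
    set B : Set (Set M) := {T ∈ 𝒮 | (T ∩ U).Nonempty ∧ x ∉ closure T} with hB
    have hBfin : B.Finite := hfin.subset (fun T hT => ⟨hT.1, hT.2.1⟩)
    have hCclosed : IsClosed (⋃ T ∈ B, closure T) :=
      hBfin.isClosed_biUnion (fun T _ => isClosed_closure)
    have hxC : x ∉ ⋃ T ∈ B, closure T := by
      intro hxc
      obtain ⟨T, hTB, hxcl⟩ := Set.mem_iUnion₂.1 hxc
      exact hTB.2.2 hxcl
    have hW : (interior U \ ⋃ T ∈ B, closure T) ∈ nhds x := by
      apply IsOpen.mem_nhds (isOpen_interior.sdiff hCclosed)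
      exact ⟨mem_interior_iff_mem_nhds.2 hU, hxC⟩
    refine Filter.mem_of_superset hW ?_
    rintro y ⟨hyU, hyC⟩
    have hycov : y ∈ ⋃₀ 𝒮 := hcover ▸ Set.mem_univ y
    obtain ⟨T, hT, hyT⟩ := hycov
    have hxclT : x ∈ closure T := by
      by_contra hxcl
      exact hyC (Set.mem_iUnion₂.2 ⟨T, ⟨hT, ⟨y, hyT, interior_subset hyU⟩, hxcl⟩,
        subset_closure hyT⟩)
    by_cases hST : S = T
    · exact hST ▸ hyT
    · have h := hfrontier S hS T hT hST ⟨x, hx, hxclT⟩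
      exact absurd (hmax T hT h.1) hST
  · -- open → maximal
    intro hopen T hT hsub
    by_contra hST
    obtain ⟨x, hx⟩ := hne S hS
    have : (S ∩ T).Nonempty := by
      have := hopen.inter_closure (t := T)
      obtain ⟨y, hy⟩ : (S ∩ closure T).Nonempty := ⟨x, hx, hsub hx⟩
      have : y ∈ closure (S ∩ T) := this ⟨hy.1, hy.2⟩
      rcases (S ∩ T).eq_empty_or_nonempty with h | h
      · rw [h, closure_empty] at this; exact absurd this (Set.notMem_empty y)
      · exact h
    exact this.ne_empty (hdisj S hS T hT hST).inter_eq
end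

section
/- With the same hypotheses (locally finite partition by locally closed connected sets with the frontier condition and strictly decreasing dimension on the boundary), the union of all maximal strata (the regular part) is open and dense in M. -/
/-!
A maximal stratum `S` is open: by the frontier condition it misses the closure of every other
stratum, and by local finiteness the union of those closures is closed, while it covers `Sᶜ`.
For density, only finitely many strata have a given point `x` in their closure; one of largest
dimension among them is maximal, since the dimension strictly increases from a stratum to any
other stratum whose closure contains it.
-/

open Set

namespace Stratification

variable {M : Type*} [TopologicalSpace M] {𝒮 : Set (Set M)}

def IsMaximalStratum (𝒮 : Set (Set M)) (S : Set M) : Prop :=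
  S ∈ 𝒮 ∧ ∀ T ∈ 𝒮, S ⊆ closure T → S = T

def regularPart (𝒮 : Set (Set M)) : Set M :=
  ⋃₀ {S | IsMaximalStratum 𝒮 S}

theorem locallyFinite_val
    (hlf : ∀ x : M, ∃ U ∈ nhds x, {S ∈ 𝒮 | (S ∩ U).Nonempty}.Finite) :
    LocallyFinite ((↑) : 𝒮 → Set M) := fun x => by
  obtain ⟨U, hU, hfin⟩ := hlf x
  exact ⟨U, hU, (hfin.preimage Subtype.val_injective.injOn).subset fun S hS => ⟨S.2, hS⟩⟩

theorem IsMaximalStratum.disjoint_closure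
    (hfrontier : ∀ S ∈ 𝒮, ∀ T ∈ 𝒮, S ≠ T → (S ∩ closure T).Nonempty → S ⊆ closure T)
    {S T : Set M} (hS : IsMaximalStratum 𝒮 S) (hT : T ∈ 𝒮) (hTS : T ≠ S) :
    Disjoint S (closure T) := by
  rw [disjoint_iff_inter_eq_empty, ← not_nonempty_iff_eq_empty]
  exact fun hmeet => hTS (hS.2 T hT (hfrontier S hS.1 T hT hTS.symm hmeet)).symm

theorem IsMaximalStratum.isOpen (hlf : LocallyFinite ((↑) : 𝒮 → Set M))
    (hcover : ⋃₀ 𝒮 = univ)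
    (hfrontier : ∀ S ∈ 𝒮, ∀ T ∈ 𝒮, S ≠ T → (S ∩ closure T).Nonempty → S ⊆ closure T)
    {S : Set M} (hS : IsMaximalStratum 𝒮 S) : IsOpen S := by
  have hcompl : Sᶜ = ⋃ T : {T : 𝒮 // (T : Set M) ≠ S}, closure (T : Set M) := by
    refine Subset.antisymm (fun y hy => ?_) (iUnion_subset fun T => ?_)
    · obtain ⟨T, hT, hyT⟩ := hcover.symm ▸ mem_univ y
      exact mem_iUnion.2 ⟨⟨⟨T, hT⟩, fun hTS => hy (hTS ▸ hyT)⟩, subset_closure hyT⟩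
    · exact (hS.disjoint_closure hfrontier T.1.2 T.2).subset_compl_left
  rw [← isClosed_compl_iff, hcompl]
  exact (hlf.closure.comp_injective Subtype.val_injective).isClosed_iUnion fun _ => isClosed_closure

theorem isOpen_regularPart (hlf : LocallyFinite ((↑) : 𝒮 → Set M)) (hcover : ⋃₀ 𝒮 = univ)
    (hfrontier : ∀ S ∈ 𝒮, ∀ T ∈ 𝒮, S ≠ T → (S ∩ closure T).Nonempty → S ⊆ closure T) :
    IsOpen (regularPart 𝒮) :=
  isOpen_sUnion fun _ hS => IsMaximalStratum.isOpen hlf hcover hfrontier hS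

theorem isMaximalStratum_of_forall_dim_le {d : Set M → ℕ} (hne : ∀ S ∈ 𝒮, S.Nonempty)
    (hdim : ∀ S ∈ 𝒮, ∀ T ∈ 𝒮, S ≠ T → (S ∩ closure T).Nonempty → d S < d T)
    {S : Set M} (hS : S ∈ 𝒮) (hSdim : ∀ T ∈ 𝒮, S ⊆ closure T → d T ≤ d S) :
    IsMaximalStratum 𝒮 S := by
  refine ⟨hS, fun T hT hST => by_contra fun hne' => ?_⟩
  obtain ⟨z, hz⟩ := hne S hS
  exact (hdim S hS T hT hne' ⟨z, hz, hST hz⟩).not_ge (hSdim T hT hST)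

theorem exists_isMaximalStratum_mem_closure {d : Set M → ℕ} (hne : ∀ S ∈ 𝒮, S.Nonempty)
    (hcover : ⋃₀ 𝒮 = univ) (hlf : LocallyFinite ((↑) : 𝒮 → Set M))
    (hdim : ∀ S ∈ 𝒮, ∀ T ∈ 𝒮, S ≠ T → (S ∩ closure T).Nonempty → d S < d T)
    (x : M) : ∃ S, IsMaximalStratum 𝒮 S ∧ x ∈ closure S := by
  obtain ⟨S₀, hS₀, hxS₀⟩ := hcover.symm ▸ mem_univ x
  obtain ⟨S, hxS, hSmax⟩ := hlf.closure.point_finite x |>.exists_maximalFor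
    (fun S : 𝒮 => d S) _ ⟨⟨S₀, hS₀⟩, subset_closure hxS₀⟩
  refine ⟨S, isMaximalStratum_of_forall_dim_le hne hdim S.2 fun T hT hST => ?_, hxS⟩
  have hxT : x ∈ closure T := closure_minimal hST isClosed_closure hxS
  by_contra! hlt
  exact hlt.not_ge (hSmax (j := ⟨T, hT⟩) hxT hlt.le)

theorem dense_regularPart {d : Set M → ℕ} (hne : ∀ S ∈ 𝒮, S.Nonempty)
    (hcover : ⋃₀ 𝒮 = univ) (hlf : LocallyFinite ((↑) : 𝒮 → Set M))
    (hdim : ∀ S ∈ 𝒮, ∀ T ∈ 𝒮, S ≠ T → (S ∩ closure T).Nonempty → d S < d T) :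
    Dense (regularPart 𝒮) := fun x => by
  obtain ⟨S, hS, hxS⟩ := exists_isMaximalStratum_mem_closure hne hcover hlf hdim x
  exact closure_mono (subset_sUnion_of_mem hS) hxS

end Stratification

open Stratification in
theorem regular_part_isOpen_dense_general
    {M : Type*} [TopologicalSpace M]
    (𝒮 : Set (Set M)) (d : Set M → ℕ)
    (hne : ∀ S ∈ 𝒮, S.Nonempty)
    (hcover : ⋃₀ 𝒮 = Set.univ)
    (hlf : ∀ x : M, ∃ U ∈ nhds x, {S ∈ 𝒮 | (S ∩ U).Nonempty}.Finite)
    (hfrontier : ∀ S ∈ 𝒮, ∀ T ∈ 𝒮, S ≠ T → (S ∩ closure T).Nonempty →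
      S ⊆ closure T ∧ d S < d T) :
    IsOpen (⋃₀ {S ∈ 𝒮 | ∀ T ∈ 𝒮, S ⊆ closure T → S = T}) ∧
      Dense (⋃₀ {S ∈ 𝒮 | ∀ T ∈ 𝒮, S ⊆ closure T → S = T}) :=
  ⟨isOpen_regularPart (locallyFinite_val hlf) hcover fun S hS T hT hST h =>
      (hfrontier S hS T hT hST h).1,
    dense_regularPart hne hcover (locallyFinite_val hlf) fun S hS T hT hST h =>
      (hfrontier S hS T hT hST h).2⟩

/-- For a stratification (a locally finite partition into locally closed connected
pieces satisfying the frontier condition with strictly decreasing dimension), the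
regular part, i.e. the union of all maximal strata, is open and dense. -/
theorem regular_part_isOpen_dense
    {M : Type*} [TopologicalSpace M] [T2Space M]
    (𝒮 : Set (Set M)) (d : Set M → ℕ)
    (hne : ∀ S ∈ 𝒮, S.Nonempty)
    (hdisj : ∀ S ∈ 𝒮, ∀ T ∈ 𝒮, S ≠ T → Disjoint S T)
    (hcover : ⋃₀ 𝒮 = Set.univ)
    (hlc : ∀ S ∈ 𝒮, IsLocallyClosed S)
    (hconn : ∀ S ∈ 𝒮, IsConnected S)
    (hlf : ∀ x : M, ∃ U ∈ nhds x, {S ∈ 𝒮 | (S ∩ U).Nonempty}.Finite)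
    (hfrontier : ∀ S ∈ 𝒮, ∀ T ∈ 𝒮, S ≠ T → (S ∩ closure T).Nonempty →
      S ⊆ closure T ∧ d S < d T) :
    IsOpen (⋃₀ {S ∈ 𝒮 | ∀ T ∈ 𝒮, S ⊆ closure T → S = T}) ∧
      Dense (⋃₀ {S ∈ 𝒮 | ∀ T ∈ 𝒮, S ⊆ closure T → S = T}) :=
  regular_part_isOpen_dense_general 𝒮 d hne hcover hlf hfrontier
end

section
/- Let 𝒫₁ and 𝒫₂ be two partitions of a locally connected topological space X by subsets that are locally connected in the subspace topology, and let 𝒫ᵢᶜ denote the partitions by connected components of the members of 𝒫ᵢ. Then 𝒫₁ᶜ = 𝒫₂ᶜ if and only if for each x ∈ X there is an open neighbourhood U of x with P₁ ∩ U = P₂ ∩ U, where Pᵢ ∈ 𝒫ᵢ is the member containing x. -/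
/-- The partition of `X` by connected components of the members of a partition `P`. -/
def componentsPartition {X : Type*} [TopologicalSpace X] (P : Set (Set X)) : Set (Set X) :=
  {C | ∃ A ∈ P, ∃ x ∈ A, C = connectedComponentIn A x}

/-- Key step for the backward direction: under the local agreement hypothesis,
the connected component of `A ∈ P₁` through `y` is contained in the member of
`P₂` through `y`. -/
lemma connectedComponentIn_subset_of_locally_eq
    {X : Type*} [TopologicalSpace X]
    (P₁ P₂ : Set (Set X))
    (h₂disj : ∀ A ∈ P₂, ∀ B ∈ P₂, A ≠ B → Disjoint A B)
    (h₂cover : ⋃₀ P₂ = Set.univ)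
    (h : ∀ x : X, ∃ U ∈ nhds x, ∀ A ∈ P₁, ∀ B ∈ P₂, x ∈ A → x ∈ B → A ∩ U = B ∩ U)
    {A B : Set X} (hA : A ∈ P₁) (hB : B ∈ P₂) {y : X} (hyA : y ∈ A) (hyB : y ∈ B) :
    connectedComponentIn A y ⊆ B := by
  classical
  choose U hUnhds hUeq using h
  -- choose the P₂-member through each point
  have hmem : ∀ z : X, ∃ Bz ∈ P₂, z ∈ Bz := by
    intro z
    have : z ∈ ⋃₀ P₂ := h₂cover ▸ Set.mem_univ z
    simpa [Set.mem_sUnion] using this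
  choose Bz hBzP hBzmem using hmem
  set S := connectedComponentIn A y with hS
  have hSA : S ⊆ A := connectedComponentIn_subset A y
  have hySmem : y ∈ S := mem_connectedComponentIn hyA
  have hSpc : IsPreconnected S := isPreconnected_connectedComponentIn
  -- local containment: points of S near z lie in Bz z
  have hloc : ∀ z ∈ S, ∀ w ∈ S ∩ U z, w ∈ Bz z := by
    intro z hz w hw
    have hzA : z ∈ A := hSA hz
    have := hUeq z A hA (Bz z) (hBzP z) hzA (hBzmem z)
    have hwAU : w ∈ A ∩ U z := ⟨hSA hw.1, hw.2⟩
    rw [this] at hwAU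
    exact hwAU.1
  intro w hwS
  by_contra hwB
  -- apply preconnectedness of S to the open cover by u and v
  set u : Set X := ⋃ z ∈ {z | z ∈ S ∧ z ∈ B}, interior (U z) with hu
  set v : Set X := ⋃ z ∈ {z | z ∈ S ∧ z ∉ B}, interior (U z) with hv
  have hu_open : IsOpen u := isOpen_biUnion fun _ _ => isOpen_interior
  have hv_open : IsOpen v := isOpen_biUnion fun _ _ => isOpen_interior
  have hcov : S ⊆ u ∪ v := by
    intro z hz
    by_cases hzB : z ∈ B
    · exact Or.inl (Set.mem_biUnion ⟨hz, hzB⟩ (mem_interior_iff_mem_nhds.mpr (hUnhds z)))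
    · exact Or.inr (Set.mem_biUnion ⟨hz, hzB⟩ (mem_interior_iff_mem_nhds.mpr (hUnhds z)))
  have hSu : (S ∩ u).Nonempty :=
    ⟨y, hySmem, Set.mem_biUnion ⟨hySmem, hyB⟩ (mem_interior_iff_mem_nhds.mpr (hUnhds y))⟩
  have hSv : (S ∩ v).Nonempty :=
    ⟨w, hwS, Set.mem_biUnion ⟨hwS, hwB⟩ (mem_interior_iff_mem_nhds.mpr (hUnhds w))⟩
  obtain ⟨p, hpS, hpu, hpv⟩ := hSpc u v hu_open hv_open hcov hSu hSv
  -- p ∈ u : p ∈ B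
  obtain ⟨z₁, hz₁, hp₁⟩ := Set.mem_iUnion₂.mp hpu
  obtain ⟨z₂, hz₂, hp₂⟩ := Set.mem_iUnion₂.mp hpv
  have hpB : p ∈ B := by
    have hz₁A : z₁ ∈ A := hSA hz₁.1
    have := hUeq z₁ A hA B hB hz₁A hz₁.2
    have hpAU : p ∈ A ∩ U z₁ := ⟨hSA hpS, interior_subset hp₁⟩
    rw [this] at hpAU
    exact hpAU.1
  -- p ∈ v : p ∈ Bz z₂, which is disjoint from B
  have hpBz : p ∈ Bz z₂ := hloc z₂ hz₂.1 p ⟨hpS, interior_subset hp₂⟩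
  have hne : Bz z₂ ≠ B := by
    intro hEq
    exact hz₂.2 (hEq ▸ hBzmem z₂)
  exact (h₂disj (Bz z₂) (hBzP z₂) B hB hne).le_bot ⟨hpBz, hpB⟩

/-- Under the local agreement hypothesis, components through a point agree. -/
lemma connectedComponentIn_eq_of_locally_eq
    {X : Type*} [TopologicalSpace X]
    (P₁ P₂ : Set (Set X))
    (h₁disj : ∀ A ∈ P₁, ∀ B ∈ P₁, A ≠ B → Disjoint A B)
    (h₂disj : ∀ A ∈ P₂, ∀ B ∈ P₂, A ≠ B → Disjoint A B)
    (h₁cover : ⋃₀ P₁ = Set.univ) (h₂cover : ⋃₀ P₂ = Set.univ)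
    (h : ∀ x : X, ∃ U ∈ nhds x, ∀ A ∈ P₁, ∀ B ∈ P₂, x ∈ A → x ∈ B → A ∩ U = B ∩ U)
    {A B : Set X} (hA : A ∈ P₁) (hB : B ∈ P₂) {y : X} (hyA : y ∈ A) (hyB : y ∈ B) :
    connectedComponentIn A y = connectedComponentIn B y := by
  have h' : ∀ x : X, ∃ U ∈ nhds x, ∀ A ∈ P₂, ∀ B ∈ P₁, x ∈ A → x ∈ B → A ∩ U = B ∩ U := by
    intro x
    obtain ⟨U, hU, hUeq⟩ := h x
    exact ⟨U, hU, fun A hA B hB hxA hxB => (hUeq B hB A hA hxB hxA).symm⟩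
  have h₁ : connectedComponentIn A y ⊆ B :=
    connectedComponentIn_subset_of_locally_eq P₁ P₂ h₂disj h₂cover h hA hB hyA hyB
  have h₂ : connectedComponentIn B y ⊆ A :=
    connectedComponentIn_subset_of_locally_eq P₂ P₁ h₁disj h₁cover h' hB hA hyB hyA
  apply Set.Subset.antisymm
  · exact isPreconnected_connectedComponentIn.subset_connectedComponentIn
      (mem_connectedComponentIn hyA) h₁
  · exact isPreconnected_connectedComponentIn.subset_connectedComponentIn
      (mem_connectedComponentIn hyB) h₂

/-- Openness of components of locally connected subsets, expressed in `X`. -/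
lemma exists_isOpen_connectedComponentIn_eq
    {X : Type*} [TopologicalSpace X] {A : Set X} (hlc : LocallyConnectedSpace A)
    {x : X} (hx : x ∈ A) :
    ∃ U : Set X, IsOpen U ∧ connectedComponentIn A x = A ∩ U := by
  have hopen : IsOpen (connectedComponent (⟨x, hx⟩ : A)) := isOpen_connectedComponent
  rw [isOpen_induced_iff] at hopen
  obtain ⟨U, hU, hUeq⟩ := hopen
  refine ⟨U, hU, ?_⟩
  rw [connectedComponentIn_eq_image hx, ← hUeq, Subtype.image_preimage_coe]

/-- Two partitions of a space by locally connected pieces induce the same partition by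
connected components if and only if around each point the two members through that
point agree on some neighbourhood. -/
theorem componentsPartition_eq_iff_locally_eq
    {X : Type*} [TopologicalSpace X]
    (P₁ P₂ : Set (Set X))
    (h₁ne : ∀ A ∈ P₁, A.Nonempty) (h₂ne : ∀ A ∈ P₂, A.Nonempty)
    (h₁disj : ∀ A ∈ P₁, ∀ B ∈ P₁, A ≠ B → Disjoint A B)
    (h₂disj : ∀ A ∈ P₂, ∀ B ∈ P₂, A ≠ B → Disjoint A B)
    (h₁cover : ⋃₀ P₁ = Set.univ) (h₂cover : ⋃₀ P₂ = Set.univ)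
    (h₁lc : ∀ A ∈ P₁, LocallyConnectedSpace A)
    (h₂lc : ∀ A ∈ P₂, LocallyConnectedSpace A) :
    componentsPartition P₁ = componentsPartition P₂ ↔
      ∀ x : X, ∃ U ∈ nhds x, ∀ A ∈ P₁, ∀ B ∈ P₂, x ∈ A → x ∈ B → A ∩ U = B ∩ U := by
  constructor
  · intro heq x
    -- members through x
    have hx₁ : x ∈ ⋃₀ P₁ := h₁cover ▸ Set.mem_univ x
    have hx₂ : x ∈ ⋃₀ P₂ := h₂cover ▸ Set.mem_univ x
    obtain ⟨A₀, hA₀, hxA₀⟩ := hx₁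
    obtain ⟨B₀, hB₀, hxB₀⟩ := hx₂
    -- the component of x in A₀ is a component of some member of P₂
    have hC₁ : connectedComponentIn A₀ x ∈ componentsPartition P₂ := by
      rw [← heq]
      exact ⟨A₀, hA₀, x, hxA₀, rfl⟩
    obtain ⟨B', hB', x', hx'B', hCeq⟩ := hC₁
    have hxC₁ : x ∈ connectedComponentIn A₀ x := mem_connectedComponentIn hxA₀
    have hxB' : x ∈ B' := by
      have := hCeq ▸ hxC₁
      exact connectedComponentIn_subset B' x' this
    have hB'B₀ : B' = B₀ := by
      by_contra hne
      exact (h₂disj B' hB' B₀ hB₀ hne).le_bot ⟨hxB', hxB₀⟩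
    have hC₁C₂ : connectedComponentIn A₀ x = connectedComponentIn B₀ x := by
      rw [hCeq, ← hB'B₀]
      exact connectedComponentIn_eq (hCeq ▸ hxC₁)
    -- open sets witnessing openness of the components in A₀ and B₀
    obtain ⟨U₁, hU₁, hCU₁⟩ := exists_isOpen_connectedComponentIn_eq (h₁lc A₀ hA₀) hxA₀
    obtain ⟨U₂, hU₂, hCU₂⟩ := exists_isOpen_connectedComponentIn_eq (h₂lc B₀ hB₀) hxB₀
    refine ⟨U₁ ∩ U₂, ?_, ?_⟩
    · refine (hU₁.inter hU₂).mem_nhds ⟨?_, ?_⟩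
      · exact (hCU₁ ▸ hxC₁).2
      · exact (hCU₂ ▸ (hC₁C₂ ▸ hxC₁)).2
    · intro A hA B hB hxA hxB
      have hAA₀ : A = A₀ := by
        by_contra hne
        exact (h₁disj A hA A₀ hA₀ hne).le_bot ⟨hxA, hxA₀⟩
      have hBB₀ : B = B₀ := by
        by_contra hne
        exact (h₂disj B hB B₀ hB₀ hne).le_bot ⟨hxB, hxB₀⟩
      subst hAA₀ hBB₀
      have hsub₂ : connectedComponentIn A x ⊆ U₂ := by
        rw [hC₁C₂, hCU₂]; exact Set.inter_subset_right
      have hsub₁ : connectedComponentIn A x ⊆ U₁ := by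
        rw [hCU₁]; exact Set.inter_subset_right
      have e₁ : A ∩ (U₁ ∩ U₂) = connectedComponentIn A x := by
        rw [← Set.inter_assoc, ← hCU₁]
        exact Set.inter_eq_left.mpr hsub₂
      have e₂ : B ∩ (U₁ ∩ U₂) = connectedComponentIn A x := by
        rw [Set.inter_comm U₁ U₂, ← Set.inter_assoc, ← hCU₂, ← hC₁C₂]
        exact Set.inter_eq_left.mpr hsub₁
      rw [e₁, e₂]
  · intro h
    ext C
    constructor
    · rintro ⟨A, hA, x, hxA, rfl⟩
      have hx₂ : x ∈ ⋃₀ P₂ := h₂cover ▸ Set.mem_univ x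
      obtain ⟨B, hB, hxB⟩ := hx₂
      exact ⟨B, hB, x, hxB,
        connectedComponentIn_eq_of_locally_eq P₁ P₂ h₁disj h₂disj h₁cover h₂cover h hA hB hxA hxB⟩
    · rintro ⟨B, hB, x, hxB, rfl⟩
      have hx₁ : x ∈ ⋃₀ P₁ := h₁cover ▸ Set.mem_univ x
      obtain ⟨A, hA, hxA⟩ := hx₁
      exact ⟨A, hA, x, hxA,
        (connectedComponentIn_eq_of_locally_eq P₁ P₂ h₁disj h₂disj h₁cover h₂cover h hA hB
          hxA hxB).symm⟩
end

section
/- Let X be a Hausdorff space and A ⊆ C(X, ℝ) a normal unital subalgebra (separating disjoint closed sets by functions with values in [0,1]), and suppose X admits a locally finite countable open cover {U_n} with each cl(U_n) compact, together with shrinkings {V_n}, {W_n} with cl(W_n) ⊆ V_n and cl(V_n) ⊆ U_n. Then there exists a proper function f ∈ A, f = Σ_n n·f_n where each f_n ∈ A satisfies supp(f_n) ⊆ U_n and f_n = 1 on cl(W_n). -/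
/-- Existence of a proper function in a normal algebra of continuous functions closed
under locally finite sums, given a locally finite countable open cover with compact
closures and two shrinkings: there are `f_n` in the algebra with support in `U n`,
equal to `1` on `closure (W n)`, such that `f = Σ n·f_n` belongs to the algebra and
is proper. -/
theorem exists_proper_function
    {X : Type*} [TopologicalSpace X] [T2Space X]
    (A : Subalgebra ℝ C(X, ℝ))
    (hnormal : ∀ C D : Set X, IsClosed C → IsClosed D → Disjoint C D →
      ∃ f ∈ A, (∀ x, f x ∈ Set.Icc (0 : ℝ) 1) ∧ (∀ x ∈ C, f x = 0) ∧ ∀ x ∈ D, f x = 1)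
    (hsum : ∀ g : ℕ → C(X, ℝ), (∀ n, g n ∈ A) →
      (LocallyFinite fun n => Function.support ⇑(g n)) →
      ∃ h ∈ A, ∀ x, h x = ∑' n, g n x)
    (U V W : ℕ → Set X)
    (hUopen : ∀ n, IsOpen (U n)) (hVopen : ∀ n, IsOpen (V n)) (hWopen : ∀ n, IsOpen (W n))
    (hUcover : ⋃ n, U n = Set.univ) (hWcover : ⋃ n, W n = Set.univ)
    (hUlf : LocallyFinite U) (hUcompact : ∀ n, IsCompact (closure (U n)))
    (hWV : ∀ n, closure (W n) ⊆ V n) (hVU : ∀ n, closure (V n) ⊆ U n) :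
    ∃ fn : ℕ → C(X, ℝ), (∀ n, fn n ∈ A) ∧
      (∀ n, Function.support ⇑(fn n) ⊆ U n) ∧
      (∀ n, ∀ x ∈ closure (W n), fn n x = 1) ∧
      (∀ n, ∀ x, fn n x ∈ Set.Icc (0 : ℝ) 1) ∧
      ∃ f ∈ A, (∀ x, f x = ∑' n : ℕ, (n : ℝ) * fn n x) ∧
        ∀ K : Set ℝ, IsCompact K → IsCompact (⇑f ⁻¹' K) := by
  -- choose the bump functions
  have hfn : ∀ n : ℕ, ∃ g ∈ A, (∀ x, g x ∈ Set.Icc (0 : ℝ) 1) ∧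
      (∀ x ∈ (V n)ᶜ, g x = 0) ∧ ∀ x ∈ closure (W n), g x = 1 := by
    intro n
    exact hnormal (V n)ᶜ (closure (W n)) (hVopen n).isClosed_compl isClosed_closure
      (Set.disjoint_compl_left_iff_subset.mpr (hWV n))
  choose fn hfnA hfn01 hfn0 hfn1 using hfn
  have hsupp : ∀ n, Function.support ⇑(fn n) ⊆ U n := by
    intro n x hx
    by_contra hxU
    have hxV : x ∈ (V n)ᶜ := fun hxV => hxU ((hVU n) (subset_closure hxV))
    exact hx (hfn0 n x hxV)
  -- the summands
  set g : ℕ → C(X, ℝ) := fun n => (n : ℝ) • fn n with hg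
  have hgA : ∀ n, g n ∈ A := fun n => A.smul_mem (hfnA n) _
  have hgsupp : ∀ n, Function.support ⇑(g n) ⊆ U n := by
    intro n x hx
    apply hsupp n
    simp only [hg, ContinuousMap.coe_smul, Pi.smul_apply, smul_eq_mul,
      Function.mem_support] at hx ⊢
    intro h0
    exact hx (by rw [h0, mul_zero])
  have hglf : LocallyFinite fun n => Function.support ⇑(g n) :=
    hUlf.subset hgsupp
  obtain ⟨f, hfA, hf⟩ := hsum g hgA hglf
  have hfeq : ∀ x, f x = ∑' n : ℕ, (n : ℝ) * fn n x := by
    intro x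
    rw [hf x]
    rfl
  refine ⟨fn, hfnA, hsupp, hfn1, hfn01, f, hfA, hfeq, ?_⟩
  -- summability at each point
  have hsummable : ∀ x, Summable fun n : ℕ => (n : ℝ) * fn n x := by
    intro x
    have hfin : (Function.support fun n : ℕ => (n : ℝ) * fn n x).Finite := by
      apply (hUlf.point_finite x).subset
      intro n hn
      exact hgsupp n (by simpa [hg] using hn)
    exact summable_of_finite_support hfin
  have hnonneg : ∀ (n : ℕ) (x : X), 0 ≤ (n : ℝ) * fn n x := fun n x =>
    mul_nonneg (Nat.cast_nonneg n) (hfn01 n x).1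
  -- key lower bound: x ∈ W m → m ≤ f x
  have hlb : ∀ m : ℕ, ∀ x ∈ W m, (m : ℝ) ≤ f x := by
    intro m x hx
    rw [hfeq x]
    have : (m : ℝ) * fn m x = m := by rw [hfn1 m x (subset_closure hx), mul_one]
    calc (m : ℝ) = (m : ℝ) * fn m x := this.symm
    _ ≤ ∑' n : ℕ, (n : ℝ) * fn n x :=
      Summable.le_tsum (hsummable x) m (fun n _ => hnonneg n x)
  intro K hK
  obtain ⟨r, hr⟩ := hK.bddAbove
  set N : ℕ := ⌈r⌉₊ with hN
  have hsub : ⇑f ⁻¹' K ⊆ ⋃ n ∈ Finset.range (N + 1), closure (U n) := by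
    intro x hx
    have hxW : ∃ m, x ∈ W m := by
      have := hWcover ▸ Set.mem_univ x
      simpa using this
    obtain ⟨m, hm⟩ := hxW
    have hfx : f x ≤ r := hr hx
    have hmN : m ≤ N := by
      by_contra hmn
      push_neg at hmn
      have h1 : (m : ℝ) ≤ f x := hlb m x hm
      have h2 : (N : ℝ) < m := by exact_mod_cast hmn
      have h3 : r ≤ N := Nat.le_ceil r
      linarith
    refine Set.mem_biUnion (Finset.mem_range.mpr (Nat.lt_succ_of_le hmN)) ?_
    exact subset_closure ((hVU m) (subset_closure ((hWV m) (subset_closure hm))))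
  have hcpt : IsCompact (⋃ n ∈ Finset.range (N + 1), closure (U n)) :=
    (Finset.range (N + 1)).isCompact_biUnion (fun n _ => hUcompact n)
  have hclosed : IsClosed (⇑f ⁻¹' K) :=
    hK.isClosed.preimage f.continuous
  exact hcpt.of_isClosed_subset hclosed hsub
end
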